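/- Let γ(q) = (q, γ_j(q), γ_z(q)) be a section of T*Q × ℝ → Q with Legendrian image (γ_i = ∂γ_z/∂q^i). Then the evolution vector field E_H and its projection E_H^γ = Tπ ∘ E_H ∘ γ are γ-related if and only if d(H ∘ γ) = 0, i.e., H ∘ γ is locally constant. -/

import Mathlib

lemma clm_expand {m : ℕ} {M : Type*} [NormedAddCommGroup M] [NormedSpace ℝ M]
    (L : (Fin m → ℝ) →L[ℝ] M) (v : Fin m → ℝ) :
    L v = ∑ j, v j • L (Pi.single j 1) := by
  have hv : v = ∑ j, v j • (Pi.single j 1 : Fin m → ℝ) := by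
    funext i
    simp [Finset.sum_apply, Pi.single_apply]
  conv_lhs => rw [hv]
  simp

lemma triple_expand {n : ℕ} (L : ((Fin n → ℝ) × (Fin n → ℝ) × ℝ) →L[ℝ] ℝ)
    (a b : Fin n → ℝ) (c : ℝ) :
    L (a, b, c) = L (a, 0, 0) + (∑ j, b j * L (0, Pi.single j 1, 0)) + c * L (0, 0, 1) := by
  have hb : b = ∑ j, b j • (Pi.single j 1 : Fin n → ℝ) := by
    funext i
    simp [Finset.sum_apply, Pi.single_apply]
  have habc : (a, b, c) = ((a, 0, 0) : (Fin n → ℝ) × (Fin n → ℝ) × ℝ)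
      + (∑ j, b j • (((0 : Fin n → ℝ), (Pi.single j 1 : Fin n → ℝ), (0 : ℝ))))
      + c • ((0 : Fin n → ℝ), (0 : Fin n → ℝ), (1 : ℝ)) := by
    refine Prod.ext ?_ (Prod.ext ?_ ?_) <;>
      simp [Prod.fst_sum, Prod.snd_sum, ← hb]
  rw [habc]
  simp only [map_add, map_sum, map_smul, smul_eq_mul]


/-- Let γ(q) = (q, γⱼ(q), γ_z(q)) be a section of T*Q × ℝ → Q with Legendrian
image, i.e. γᵢ = ∂γ_z/∂qⁱ.  With π(q,p,z) = q, the evolution vector field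
E_H = (∂H/∂pᵢ)∂/∂qⁱ - (∂H/∂qⁱ + pᵢ∂H/∂z)∂/∂pᵢ + pᵢ(∂H/∂pᵢ)∂/∂z and its
projection E_H^γ = Tπ ∘ E_H ∘ γ are γ-related if and only if d(H ∘ γ) = 0,
i.e. H ∘ γ is locally constant. -/
theorem legendrian_hamilton_jacobi_evolution_iff (n : ℕ)
    (H : ((Fin n → ℝ) × (Fin n → ℝ) × ℝ) → ℝ) (hH : ContDiff ℝ (⊤ : ℕ∞) H)
    (EH : ((Fin n → ℝ) × (Fin n → ℝ) × ℝ) → (Fin n → ℝ) × (Fin n → ℝ) × ℝ)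
    (hEH : ∀ x, EH x =
      ((fun i => fderiv ℝ H x ((0 : Fin n → ℝ), (Pi.single i 1 : Fin n → ℝ), (0 : ℝ))),
       (fun i => -(fderiv ℝ H x ((Pi.single i 1 : Fin n → ℝ), 0, 0) +
          x.2.1 i * fderiv ℝ H x ((0 : Fin n → ℝ), (0 : Fin n → ℝ), (1 : ℝ)))),
       (∑ i, x.2.1 i * fderiv ℝ H x ((0 : Fin n → ℝ), (Pi.single i 1 : Fin n → ℝ), (0 : ℝ)))))
    (γz : (Fin n → ℝ) → ℝ) (hγz : ContDiff ℝ (⊤ : ℕ∞) γz)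
    (γ : (Fin n → ℝ) → (Fin n → ℝ) × (Fin n → ℝ) × ℝ)
    -- the section is the 1-jet of γz, i.e. it has Legendrian image:
    (hγ : ∀ q, γ q = (q, (fun i => fderiv ℝ γz q (Pi.single i 1)), γz q))
    (EHγ : (Fin n → ℝ) → (Fin n → ℝ))
    (hEHγ : ∀ q, EHγ q = (EH (γ q)).1) :
    (∀ q, EH (γ q) = fderiv ℝ γ q (EHγ q)) ↔
      (∀ q, fderiv ℝ (fun q' => H (γ q')) q = 0) := by
  set g : (Fin n → ℝ) → (Fin n → ℝ) := fun q i => fderiv ℝ γz q (Pi.single i 1) with hg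
  have hγfun : γ = fun q => (q, g q, γz q) := funext hγ
  have hγzd : Differentiable ℝ γz := hγz.differentiable (by simp)
  have hdγz : ContDiff ℝ (⊤ : ℕ∞) (fderiv ℝ γz) := hγz.fderiv_right (by simp)
  have hdγzd : Differentiable ℝ (fderiv ℝ γz) := hdγz.differentiable (by simp)
  have hHd : Differentiable ℝ H := hH.differentiable (by simp)
  have hgH : ∀ q, HasFDerivAt g
      ((ContinuousLinearMap.pi (fun i =>
        ContinuousLinearMap.apply ℝ ℝ (Pi.single i 1 : Fin n → ℝ))).comp
        (fderiv ℝ (fderiv ℝ γz) q)) q := fun q =>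
    ((ContinuousLinearMap.pi (fun i =>
        ContinuousLinearMap.apply ℝ ℝ (Pi.single i 1 : Fin n → ℝ))).hasFDerivAt).comp q
      (hdγzd q).hasFDerivAt
  have hgd : Differentiable ℝ g := fun q => (hgH q).differentiableAt
  have hγd : Differentiable ℝ γ := by
    rw [hγfun]; exact differentiable_id.prodMk (hgd.prodMk hγzd)
  have hfγ : ∀ q v, fderiv ℝ γ q v = (v, fderiv ℝ g q v, fderiv ℝ γz q v) := by
    intro q v
    have h1 : HasFDerivAt γ ((ContinuousLinearMap.id ℝ (Fin n → ℝ)).prod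
        ((fderiv ℝ g q).prod (fderiv ℝ γz q))) q := by
      rw [hγfun]
      exact HasFDerivAt.prodMk (hasFDerivAt_id q) (HasFDerivAt.prodMk (hgd q).hasFDerivAt (hγzd q).hasFDerivAt)
    rw [h1.fderiv]; rfl
  have hgfd : ∀ q v i, fderiv ℝ g q v i = fderiv ℝ (fderiv ℝ γz) q v (Pi.single i 1) := by
    intro q v i
    rw [(hgH q).fderiv]; rfl
  have hsymm : ∀ q u v, fderiv ℝ (fderiv ℝ γz) q u v = fderiv ℝ (fderiv ℝ γz) q v u :=
    fun q u v => second_derivative_symmetric (fun y => (hγzd y).hasFDerivAt)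
      (hdγzd q).hasFDerivAt u v
  have hγ21 : ∀ q, (γ q).2.1 = g q := by intro q; rw [hγ q]
  have hgval : ∀ q i, fderiv ℝ γz q (Pi.single i 1) = g q i := fun _ _ => rfl
  have hA : ∀ q j, EHγ q j = fderiv ℝ H (γ q) (0, Pi.single j 1, 0) := by
    intro q j; rw [hEHγ, hEH]
  have key : ∀ q i, fderiv ℝ (fun q' => H (γ q')) q (Pi.single i 1)
      = fderiv ℝ H (γ q) (Pi.single i 1, 0, 0)
        + g q i * fderiv ℝ H (γ q) (0, 0, 1)
        + fderiv ℝ g q (EHγ q) i := by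
    intro q i
    have hc : fderiv ℝ (fun q' => H (γ q')) q
        = (fderiv ℝ H (γ q)).comp (fderiv ℝ γ q) := fderiv_comp q (hHd _) (hγd q)
    have h3 : fderiv ℝ g q (EHγ q) i
        = ∑ j, EHγ q j * fderiv ℝ g q (Pi.single i 1) j := by
      rw [hgfd, hsymm q (EHγ q) (Pi.single i 1),
        clm_expand (fderiv ℝ (fderiv ℝ γz) q (Pi.single i 1)) (EHγ q)]
      refine Finset.sum_congr rfl fun j _ => ?_
      rw [hgfd, smul_eq_mul]
    have h4 : ∑ j, fderiv ℝ g q (Pi.single i 1) j * fderiv ℝ H (γ q) (0, Pi.single j 1, 0)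
        = ∑ j, EHγ q j * fderiv ℝ g q (Pi.single i 1) j :=
      Finset.sum_congr rfl fun j _ => by rw [hA]; ring
    rw [hc, ContinuousLinearMap.comp_apply, hfγ q (Pi.single i 1), triple_expand,
      hgval, h4, ← h3]
    ring
  constructor
  · intro hrel q
    have hz : ∀ i, fderiv ℝ (fun q' => H (γ q')) q (Pi.single i 1) = 0 := by
      intro i
      have h := hrel q
      rw [hEH (γ q), hfγ q (EHγ q)] at h
      have h2 := congrArg (fun x => x.2.1 i) h
      simp only [hγ21 q] at h2
      rw [key]
      linarith [h2]
    ext v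
    rw [clm_expand (fderiv ℝ (fun q' => H (γ q')) q) v]
    simp [hz]
  · intro hflat q
    rw [hEH (γ q), hfγ q (EHγ q)]
    refine Prod.ext ?_ (Prod.ext ?_ ?_)
    · funext i; exact (hA q i).symm
    · funext i
      have h0 : fderiv ℝ (fun q' => H (γ q')) q (Pi.single i 1) = 0 := by
        rw [hflat q]; simp
      rw [key] at h0
      simp only [hγ21 q]
      linarith [h0]
    · rw [clm_expand (fderiv ℝ γz q) (EHγ q)]
      simp only [hγ21 q, hgval, smul_eq_mul]
      exact Finset.sum_congr rfl fun j _ => by rw [hA]; ring
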